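/- There exists a constant C > 0 such that for all β ∈ (0,1], σ̄_β ≤ C √β. In fact one can take the test pair v ≡ (an optimal Modica–Mortola-type profile equal to 1) and φ_β linear of slope π√β/2 on an interval of length 2/√β, giving G_β(1, φ_β) ≤ C√β. -/

import Mathlib

open MeasureTheory Real Set Filter

noncomputable def gInt (β : ℝ) (v φ : ℝ → ℝ) (t : ℝ) : ℝ :=
  (deriv v t)^2 + (1 - (v t)^2)^2 / 2
    + (v t)^2 * (deriv φ t)^2 / 4 + (β/4) * (v t)^4 * (Real.sin (φ t))^2

noncomputable def Gbeta (β : ℝ) (v φ : ℝ → ℝ) : ℝ := (1/2) * ∫ t : ℝ, gInt β v φ t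

def Admissible (β : ℝ) (v φ : ℝ → ℝ) : Prop :=
  Differentiable ℝ v ∧ (∀ t, 0 ≤ v t) ∧
  Differentiable ℝ φ ∧ (∀ t, φ t ∈ Set.Icc (0:ℝ) Real.pi) ∧
  Tendsto φ atBot (nhds 0) ∧ Tendsto φ atTop (nhds Real.pi) ∧
  Integrable (gInt β v φ)

noncomputable def sigmaBar (β : ℝ) : ℝ :=
  sInf {e : ℝ | ∃ v φ, Admissible β v φ ∧ e = Gbeta β v φ}

/-- The linear test phase of slope `π√β/2` on an interval of length `2/√β`. -/
noncomputable def phiBeta (β : ℝ) : ℝ → ℝ := fun t =>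
  if t ≤ -(1/Real.sqrt β) then 0
  else if t ≤ 1/Real.sqrt β then (Real.pi * Real.sqrt β / 2) * (t + 1/Real.sqrt β)
  else Real.pi

/-!
With `v ≡ 1` the energy density is `φ'²/4 + (β/4) sin²φ`, so a phase turning from `0` to `π` over a
length `L` costs about `1/L + βL`, which is `O(√β)` for `L ~ 1/√β`. The density of `phiBeta` vanishes
off its ramp and is at most `(π²/16 + 1/4) β` on it; the slope bound holds at the two corners too
(where `deriv` is a junk value) because `phiBeta` is Lipschitz. Having corners, `phiBeta` is not
admissible, so `sigmaBar` is bounded with the smooth phase `arctan (√β t) + π/2` instead, whose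
density is at most `(β/2) / (1 + β t²)`, of integral `π √β / 2`.
-/

open Topology

section Energy

variable {β : ℝ} {v φ : ℝ → ℝ}

lemma gInt_nonneg (hβ : 0 ≤ β) (v φ : ℝ → ℝ) (t : ℝ) : 0 ≤ gInt β v φ t := by
  unfold gInt
  positivity

lemma gInt_const_one (β : ℝ) (φ : ℝ → ℝ) (t : ℝ) :
    gInt β (fun _ => 1) φ t = deriv φ t ^ 2 / 4 + β / 4 * sin (φ t) ^ 2 := by
  simp [gInt]

lemma measurable_gInt (hv : Measurable v) (hφ : Measurable φ) : Measurable (gInt β v φ) := by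
  have := measurable_deriv v
  have := measurable_deriv φ
  unfold gInt
  fun_prop

lemma integrable_gInt_of_le {h : ℝ → ℝ} (hβ : 0 ≤ β) (hv : Measurable v) (hφ : Measurable φ)
    (hh : Integrable h) (hle : ∀ t, gInt β v φ t ≤ h t) : Integrable (gInt β v φ) :=
  hh.mono' (measurable_gInt hv hφ).aestronglyMeasurable <| ae_of_all _ fun t => by
    rw [Real.norm_of_nonneg (gInt_nonneg hβ v φ t)]
    exact hle t

lemma Gbeta_le_of_gInt_le {h : ℝ → ℝ} (hβ : 0 ≤ β) (hv : Measurable v) (hφ : Measurable φ)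
    (hh : Integrable h) (hle : ∀ t, gInt β v φ t ≤ h t) :
    Gbeta β v φ ≤ (1 / 2) * ∫ t, h t := by
  unfold Gbeta
  gcongr
  exacts [integrable_gInt_of_le hβ hv hφ hh hle, hle]

lemma sigmaBar_le_Gbeta (hβ : 0 ≤ β) (h : Admissible β v φ) : sigmaBar β ≤ Gbeta β v φ := by
  refine csInf_le ⟨0, ?_⟩ ⟨v, φ, h, rfl⟩
  rintro _ ⟨v', φ', -, rfl⟩
  unfold Gbeta
  have : 0 ≤ ∫ t, gInt β v' φ' t := integral_nonneg fun t => gInt_nonneg hβ v' φ' t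
  positivity

end Energy

lemma integral_inv_one_add_sq_mul {c : ℝ} (hc : 0 < c) :
    ∫ t : ℝ, (1 + (c * t) ^ 2)⁻¹ = π / c := by
  rw [Measure.integral_comp_mul_left (fun t => (1 + t ^ 2)⁻¹), integral_univ_inv_one_add_sq,
    abs_of_pos (inv_pos.2 hc), smul_eq_mul, inv_mul_eq_div]

noncomputable def phiArctan (β : ℝ) : ℝ → ℝ := fun t => arctan (√β * t) + π / 2

section phiArctan

variable {β : ℝ}

lemma hasDerivAt_phiArctan (β t : ℝ) :
    HasDerivAt (phiArctan β) (√β / (1 + (√β * t) ^ 2)) t := by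
  have h := ((hasDerivAt_id' t).const_mul √β).arctan.add_const (π / 2)
  exact h.congr_deriv (by field_simp)

lemma differentiable_phiArctan (β : ℝ) : Differentiable ℝ (phiArctan β) :=
  fun t => (hasDerivAt_phiArctan β t).differentiableAt

lemma gInt_phiArctan_le (hβ : 0 ≤ β) (t : ℝ) :
    gInt β (fun _ => 1) (phiArctan β) t ≤ β / 2 * (1 + (√β * t) ^ 2)⁻¹ := by
  set q := 1 + (√β * t) ^ 2
  have hq : 1 ≤ q := le_add_of_nonneg_right (sq_nonneg _)
  have hsin : sin (phiArctan β t) ^ 2 = q⁻¹ := by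
    rw [phiArctan, sin_add_pi_div_two, cos_sq_arctan, one_div]
  rw [gInt_const_one, (hasDerivAt_phiArctan β t).deriv, hsin, div_pow, sq_sqrt hβ]
  have : β / q ^ 2 ≤ β / q := div_le_div_of_nonneg_left hβ (by positivity) (by nlinarith)
  calc β / q ^ 2 / 4 + β / 4 * q⁻¹ ≤ β / q / 4 + β / 4 * q⁻¹ := by gcongr
    _ = β / 2 * q⁻¹ := by ring

lemma admissible_phiArctan (hβ : 0 < β) : Admissible β (fun _ => 1) (phiArctan β) := by
  have hs : 0 < √β := sqrt_pos.2 hβ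
  refine ⟨differentiable_const 1, fun _ => zero_le_one,
    differentiable_phiArctan β, fun t => ⟨?_, ?_⟩, ?_, ?_, ?_⟩
  · show 0 ≤ arctan (√β * t) + π / 2
    linarith [neg_pi_div_two_lt_arctan (√β * t)]
  · show arctan (√β * t) + π / 2 ≤ π
    linarith [arctan_lt_pi_div_two (√β * t)]
  · have := ((tendsto_arctan_atBot.mono_right nhdsWithin_le_nhds).comp
      (tendsto_id.const_mul_atBot hs)).add_const (π / 2)
    rwa [neg_add_cancel] at this
  · have := ((tendsto_arctan_atTop.mono_right nhdsWithin_le_nhds).comp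
      (tendsto_id.const_mul_atTop hs)).add_const (π / 2)
    rwa [add_halves] at this
  · exact integrable_gInt_of_le hβ.le measurable_const
      (differentiable_phiArctan β).continuous.measurable
      ((integrable_inv_one_add_sq.comp_mul_left' hs.ne').const_mul _) (gInt_phiArctan_le hβ.le)

lemma Gbeta_phiArctan_le (hβ : 0 < β) : Gbeta β (fun _ => 1) (phiArctan β) ≤ π / 4 * √β := by
  have hs : 0 < √β := sqrt_pos.2 hβ
  calc Gbeta β (fun _ => 1) (phiArctan β)
      ≤ 1 / 2 * ∫ t, β / 2 * (1 + (√β * t) ^ 2)⁻¹ :=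
        Gbeta_le_of_gInt_le hβ.le measurable_const
          (differentiable_phiArctan β).continuous.measurable
          ((integrable_inv_one_add_sq.comp_mul_left' hs.ne').const_mul _) (gInt_phiArctan_le hβ.le)
    _ = π / 4 * √β := by
        rw [integral_const_mul, integral_inv_one_add_sq_mul hs]
        nth_rw 1 [← sq_sqrt hβ.le]
        field_simp
        norm_num

end phiArctan

section phiBeta

variable {β : ℝ}

lemma phiBeta_eq_clamp (hβ : 0 < β) (t : ℝ) :
    phiBeta β t = π * √β / 2 * (max (min t (1 / √β)) (-(1 / √β)) + 1 / √β) := by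
  have ha : 0 < 1 / √β := by positivity
  unfold phiBeta
  split_ifs with h₁ h₂
  · rw [min_eq_left (by linarith), max_eq_right h₁]
    ring
  · rw [min_eq_left h₂, max_eq_left (by linarith)]
  · rw [min_eq_right (by linarith), max_eq_left (by linarith)]
    field_simp
    ring

lemma abs_deriv_phiBeta_le (hβ : 0 < β) (t : ℝ) : |deriv (phiBeta β) t| ≤ π * √β / 2 := by
  have hc : 0 ≤ π * √β / 2 := by positivity
  refine norm_deriv_le_of_lip' (f := phiBeta β) hc (Eventually.of_forall fun x => ?_)
  rw [Real.norm_eq_abs, Real.norm_eq_abs, phiBeta_eq_clamp hβ, phiBeta_eq_clamp hβ,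
    ← mul_sub, abs_mul, abs_of_nonneg hc, add_sub_add_right_eq_sub]
  refine mul_le_mul_of_nonneg_left ?_ hc
  calc _ ≤ |min x (1 / √β) - min t (1 / √β)| := abs_max_sub_max_le_abs _ _ _
    _ ≤ max |x - t| |1 / √β - 1 / √β| := abs_min_sub_min_le_max _ _ _ _
    _ = |x - t| := by simp

lemma phiBeta_of_le_neg {t : ℝ} (ht : t ≤ -(1 / √β)) : phiBeta β t = 0 := if_pos ht

lemma phiBeta_of_gt {t : ℝ} (ht : 1 / √β < t) : phiBeta β t = π := by
  have ha : 0 ≤ 1 / √β := by positivity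
  rw [phiBeta, if_neg (by linarith), if_neg (not_le.2 ht)]

lemma phiBeta_eventuallyEq_of_notMem {t : ℝ} (ht : t ∉ Icc (-(1 / √β)) (1 / √β)) :
    phiBeta β =ᶠ[𝓝 t] fun _ => phiBeta β t := by
  rcases not_and_or.1 ht with ht | ht <;> rw [not_le] at ht
  · filter_upwards [Iio_mem_nhds ht] with x hx
    rw [phiBeta_of_le_neg hx.le, phiBeta_of_le_neg ht.le]
  · filter_upwards [Ioi_mem_nhds ht] with x hx
    rw [phiBeta_of_gt hx, phiBeta_of_gt ht]

lemma sin_phiBeta_of_notMem {t : ℝ} (ht : t ∉ Icc (-(1 / √β)) (1 / √β)) :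
    sin (phiBeta β t) = 0 := by
  rcases not_and_or.1 ht with ht | ht <;> rw [not_le] at ht
  · rw [phiBeta_of_le_neg ht.le, sin_zero]
  · rw [phiBeta_of_gt ht, sin_pi]

lemma continuous_phiBeta (hβ : 0 < β) : Continuous (phiBeta β) := by
  rw [funext (phiBeta_eq_clamp hβ)]
  fun_prop

lemma gInt_phiBeta_le (hβ : 0 < β) (t : ℝ) :
    gInt β (fun _ => 1) (phiBeta β) t ≤
      (Icc (-(1 / √β)) (1 / √β)).indicator (fun _ => (π ^ 2 / 16 + 1 / 4) * β) t := by
  rw [gInt_const_one]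
  by_cases ht : t ∈ Icc (-(1 / √β)) (1 / √β)
  · have hderiv : deriv (phiBeta β) t ^ 2 ≤ π ^ 2 * β / 4 := by
      calc deriv (phiBeta β) t ^ 2 ≤ (π * √β / 2) ^ 2 :=
            sq_le_sq' (abs_le.1 (abs_deriv_phiBeta_le hβ t)).1
              (abs_le.1 (abs_deriv_phiBeta_le hβ t)).2
        _ = π ^ 2 * β / 4 := by rw [div_pow, mul_pow, sq_sqrt hβ.le]; ring
    rw [indicator_of_mem ht]
    nlinarith [sin_sq_le_one (phiBeta β t)]
  · rw [indicator_of_notMem ht, (phiBeta_eventuallyEq_of_notMem ht).deriv_eq, deriv_const,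
      sin_phiBeta_of_notMem ht]
    simp

lemma Gbeta_phiBeta_le (hβ : 0 < β) :
    Gbeta β (fun _ => 1) (phiBeta β) ≤ (π ^ 2 / 16 + 1 / 4) * √β := by
  calc Gbeta β (fun _ => 1) (phiBeta β)
      ≤ 1 / 2 * ∫ t,
          (Icc (-(1 / √β)) (1 / √β)).indicator (fun _ => (π ^ 2 / 16 + 1 / 4) * β) t :=
        Gbeta_le_of_gInt_le hβ.le measurable_const (continuous_phiBeta hβ).measurable
          ((integrable_indicator_iff measurableSet_Icc).2
            (integrableOn_const measure_Icc_lt_top.ne))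
          (gInt_phiBeta_le hβ)
    _ = (π ^ 2 / 16 + 1 / 4) * √β := by
        rw [integral_indicator_const _ measurableSet_Icc,
          volume_real_Icc_of_le (neg_le_self (by positivity)), smul_eq_mul]
        field_simp
        rw [sq_sqrt hβ.le]
        ring

end phiBeta

theorem sigmaBar_small_beta :
    ∃ C > (0:ℝ), ∀ β ∈ Set.Ioc (0:ℝ) 1,
      sigmaBar β ≤ C * Real.sqrt β ∧
      Gbeta β (fun _ => 1) (phiBeta β) ≤ C * Real.sqrt β := by
  refine ⟨1, one_pos, fun β ⟨hβ, _⟩ => ⟨?_, ?_⟩⟩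
  · calc sigmaBar β ≤ Gbeta β (fun _ => 1) (phiArctan β) :=
          sigmaBar_le_Gbeta hβ.le (admissible_phiArctan hβ)
      _ ≤ π / 4 * √β := Gbeta_phiArctan_le hβ
      _ ≤ 1 * √β := by gcongr; linarith [pi_le_four]
  · calc Gbeta β (fun _ => 1) (phiBeta β) ≤ (π ^ 2 / 16 + 1 / 4) * √β := Gbeta_phiBeta_le hβ
      _ ≤ 1 * √β := by gcongr; nlinarith [pi_lt_d2, pi_pos]
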